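/- Every connected graph G has a connecting transition set of size τ(G), where τ(G) is the sum, over all co-connected components C of G with |C| ≥ 2, of (|C| − 2) if the subgraph of G induced by C is connected, and of (|C| − 1) otherwise. -/

import Mathlib

variable {V : Type*}

/-- The transition consisting of the edges `ab` and `bc`, written `abc`. -/
def transitionOf (a b c : V) : Sym2 (Sym2 V) := s(s(a, b), s(b, c))

/-- `t` is a transition of `G`: an unordered pair of two distinct adjacent edges. -/
def SimpleGraph.IsTransition (G : SimpleGraph V) (t : Sym2 (Sym2 V)) : Prop :=
  ∃ a b c, G.Adj a b ∧ G.Adj b c ∧ a ≠ c ∧ t = transitionOf a b c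

/-- A list of vertices (the support of a walk) is `T`-compatible: every pair of
consecutive edges is either a transition of `T` or a backtrack. -/
def TCompatible (T : Set (Sym2 (Sym2 V))) (l : List V) : Prop :=
  ∀ (i : ℕ) (h : i + 2 < l.length),
    l[i]'(by omega) = l[i + 2]'h ∨
    transitionOf (l[i]'(by omega)) (l[i + 1]'(by omega)) (l[i + 2]'h) ∈ T

/-- `G` is `T`-connected: every two vertices are joined by a `T`-compatible walk. -/
def SimpleGraph.TConnected (G : SimpleGraph V) (T : Set (Sym2 (Sym2 V))) : Prop :=
  ∀ u v : V, ∃ p : G.Walk u v, TCompatible T p.support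

/-- `T` is a connecting transition set of `G`. -/
def SimpleGraph.ConnectingTransitionSet (G : SimpleGraph V)
    (T : Finset (Sym2 (Sym2 V))) : Prop :=
  (∀ t ∈ T, G.IsTransition t) ∧ G.TConnected ↑T

/-- `H` is a connecting hypergraph of `G`: every hyperedge has at least two vertices and
induces a connected subgraph, and every pair of distinct non-adjacent vertices is
contained in a common hyperedge. -/
def SimpleGraph.ConnectingHypergraph (G : SimpleGraph V) (H : Finset (Finset V)) : Prop :=
  (∀ E ∈ H, 2 ≤ E.card ∧ (G.induce (E : Set V)).Connected) ∧
  ∀ u v : V, u ≠ v → ¬G.Adj u v → ∃ E ∈ H, u ∈ E ∧ v ∈ E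

/-- The cost of a hypergraph: the sum over hyperedges of (size − 2). -/
def hcost (H : Finset (Finset V)) : ℕ := ∑ E ∈ H, (E.card - 2)

/-- The quantity τ(G): the sum over co-connected components `C` of `G` with `|C| ≥ 2`
of `|C| − 2` if `G[C]` is connected and `|C| − 1` otherwise. -/
noncomputable def tau {V : Type*} [Fintype V] (G : SimpleGraph V) : ℕ := by
  classical
  haveI : Fintype Gᶜ.ConnectedComponent := Fintype.ofFinite _
  exact ∑ C : Gᶜ.ConnectedComponent,
    if 2 ≤ C.supp.ncard then
      (if (G.induce C.supp).Connected then C.supp.ncard - 2 else C.supp.ncard - 1)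
    else 0

/-!
Say that `T` funnels a vertex set `S` into the edge `xr` if every vertex of `S` reaches `r` by a
`T`-compatible walk inside `S` whose last edge is `xr`. Two such walks glue, backtracking at `r`,
into a `T`-compatible walk between any two vertices of `S`.

A connected graph on `n ≥ 2` vertices is funnelled by `n - 2` transitions: remove a vertex `v`
that leaves the graph connected, funnel the rest, and let `v` enter through a neighbour `u` by
the single transition `v u y`, where `y` follows `u` on its funnel walk.

Vertices in different co-connected components are adjacent, so it suffices to funnel each
co-connected component `C`. If `G[C]` is connected this takes `|C| - 2` transitions. Otherwise
some vertex `w` lies outside `C`; it is adjacent to all of `C`, so `G[C ∪ {w}]` is connected and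
`|C| - 1` transitions suffice. The sets `C ∪ {w}` of two components share at most two vertices,
while a transition has three, so the transition sets are disjoint and their sizes add up to `τ(G)`.
-/

theorem List.IsInfix.infix_append_or_infix_append {α : Type*} {m A C B : List α}
    (h : m <:+: A ++ C ++ B) (hm : m.length ≤ C.length + 1) :
    m <:+: A ++ C ∨ m <:+: C ++ B := by
  rcases List.infix_append_iff.mp h with h | h | ⟨l₁, l₂, rfl, h₁, h₂⟩
  · exact .inl h
  · exact .inr (List.infix_append_of_infix_right h)
  · obtain rfl | hl₂ := eq_or_ne l₂ []
    · exact .inl (by simpa using h₁.isInfix)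
    · have hl₁ : l₁.length ≤ C.length := by
        have := List.length_pos_of_ne_nil hl₂
        simp only [List.length_append] at hm
        omega
      have h₁C : l₁ <:+ C := List.suffix_of_suffix_length_le h₁ (List.suffix_append A C) hl₁
      exact .inr (List.infix_append_iff.mpr (.inr (.inr ⟨l₁, l₂, rfl, h₁C, h₂⟩)))

lemma transitionOf_comm (a b c : V) : transitionOf c b a = transitionOf a b c := by
  simp only [transitionOf, Sym2.eq_swap]

lemma transitionOf_map {W : Type*} (f : V → W) (a b c : V) :
    Sym2.map (Sym2.map f) (transitionOf a b c) = transitionOf (f a) (f b) (f c) := by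
  simp [transitionOf]

section TCompatible

variable {T T' : Set (Sym2 (Sym2 V))} {l : List V}

lemma tCompatible_iff_infix :
    TCompatible T l ↔ ∀ a b c, [a, b, c] <:+: l → a = c ∨ transitionOf a b c ∈ T := by
  constructor
  · intro h a b c habc
    obtain ⟨k, -, hget⟩ := List.infix_iff_getElem?.mp habc
    obtain ⟨_, rfl⟩ := List.getElem?_eq_some_iff.mp (by simpa using hget 0 (by simp))
    obtain ⟨_, rfl⟩ :=
      List.getElem?_eq_some_iff.mp (by simpa [Nat.add_comm] using hget 1 (by simp))
    obtain ⟨hk, rfl⟩ :=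
      List.getElem?_eq_some_iff.mp (by simpa [Nat.add_comm] using hget 2 (by simp))
    exact h k hk
  · intro h i hi
    refine h _ _ _ (List.infix_iff_getElem?.mpr ⟨i, by simp; omega, fun j hj => ?_⟩)
    simp only [List.length_cons, List.length_nil] at hj
    interval_cases j <;> simp [Nat.add_comm]

lemma TCompatible.mono (hT : T ⊆ T') (h : TCompatible T l) : TCompatible T' l :=
  fun i hi => (h i hi).imp id (@hT _)

lemma tCompatible_of_length_le_two (hl : l.length ≤ 2) : TCompatible T l :=
  fun i hi => absurd hi (by omega)

lemma TCompatible.map {W : Type*} (f : V → W) (h : TCompatible T l) :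
    TCompatible (Sym2.map (Sym2.map f) '' T) (l.map f) := by
  rw [tCompatible_iff_infix] at h ⊢
  intro a b c habc
  obtain ⟨m, hm, hmap⟩ := List.infix_map_iff.mp habc
  match m, hmap with
  | [a', b', c'], hmap =>
    simp only [List.map_cons, List.map_nil, List.cons.injEq, and_true] at hmap
    obtain ⟨rfl, rfl, rfl⟩ := hmap
    exact (h a' b' c' hm).imp (congrArg f) fun ht => ⟨_, ht, transitionOf_map f a' b' c'⟩

lemma TCompatible.reverse (h : TCompatible T l) : TCompatible T l.reverse := by
  rw [tCompatible_iff_infix] at h ⊢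
  intro a b c habc
  have := h c b a (by simpa using List.reverse_infix.mpr habc)
  rwa [transitionOf_comm, eq_comm] at this

lemma TCompatible.cons {a b c : V} (h : TCompatible T (b :: c :: l))
    (habc : a = c ∨ transitionOf a b c ∈ T) : TCompatible T (a :: b :: c :: l) := by
  rw [tCompatible_iff_infix] at h ⊢
  intro a' b' c' hm
  rcases List.infix_cons_iff.mp hm with hm | hm
  · simp only [List.cons_prefix_cons, List.nil_prefix, and_true] at hm
    obtain ⟨rfl, rfl, rfl⟩ := hm
    exact habc
  · exact h a' b' c' hm

lemma TCompatible.append_of_two_le_length {A C B : List V} (h₁ : TCompatible T (A ++ C))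
    (h₂ : TCompatible T (C ++ B)) (hC : 2 ≤ C.length) : TCompatible T (A ++ C ++ B) := by
  rw [tCompatible_iff_infix] at h₁ h₂ ⊢
  intro a b c habc
  rcases habc.infix_append_or_infix_append (by simp; omega) with h | h
  exacts [h₁ a b c h, h₂ a b c h]

end TCompatible

namespace SimpleGraph

variable {W : Type*} {G : SimpleGraph V} {T T' : Set (Sym2 (Sym2 V))} {x r u v : V} {S : Set V}

def IsFunnel (G : SimpleGraph V) (T : Set (Sym2 (Sym2 V))) (x r : V) (S : Set V) : Prop :=
  ∀ v ∈ S, ∃ p : G.Walk v r,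
    (∀ z ∈ p.support, z ∈ S) ∧ TCompatible T p.support ∧ [x, r] <:+ p.support

lemma IsFunnel.mono (hT : T ⊆ T') (h : G.IsFunnel T x r S) : G.IsFunnel T' x r S := by
  intro v hv
  obtain ⟨p, hpS, hpT, hxr⟩ := h v hv
  exact ⟨p, hpS, hpT.mono hT, hxr⟩

lemma isFunnel_pair (h : G.Adj x r) : G.IsFunnel T x r {x, r} := by
  rintro v (rfl | rfl)
  · exact ⟨.cons h .nil, by simp, tCompatible_of_length_le_two (by simp), by simp⟩
  · refine ⟨.cons h.symm (.cons h .nil), by simp, ?_, by simp⟩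
    simpa using (tCompatible_of_length_le_two (T := T) (l := [x, v]) (by simp)).cons (.inl rfl)

lemma IsFunnel.map {G' : SimpleGraph W} (f : G' ↪g G) {T : Set (Sym2 (Sym2 W))} {x r : W}
    {S : Set W} (h : G'.IsFunnel T x r S) :
    G.IsFunnel (Sym2.map (Sym2.map f) '' T) (f x) (f r) (f '' S) := by
  rintro _ ⟨v, hv, rfl⟩
  obtain ⟨p, hpS, hpT, hxr⟩ := h v hv
  refine ⟨p.map f.toHom, ?_, ?_, ?_⟩ <;> rw [Walk.support_map]
  · simpa using fun z hz => Set.mem_image_of_mem f (hpS z hz)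
  · exact hpT.map f
  · exact hxr.map f

/-- The new transition `v u y` lets `v` enter the funnel through the funnel walk of `u`,
whose second vertex is `y`. -/
lemma IsFunnel.insert (h : G.IsFunnel T x r S) (hu : u ∈ S) (hvu : G.Adj v u) :
    ∃ y ∈ S, G.Adj u y ∧
      G.IsFunnel (insert (transitionOf v u y) T) x r (insert v S) := by
  obtain ⟨p, hpS, hpT, hxr⟩ := h u hu
  cases p with
  | nil => simpa using hxr.length_le
  | @cons _ y _ huy p =>
    refine ⟨y, hpS y (by simp), huy, ?_⟩
    rintro w (rfl | hw)
    · refine ⟨.cons hvu (.cons huy p), ?_, ?_, ?_⟩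
      · simpa using ⟨.inr hu, fun z hz => .inr (hpS z (by simp [hz]))⟩
      · rw [Walk.support_cons, Walk.support_cons, ← p.cons_tail_support]
        rw [Walk.support_cons, ← p.cons_tail_support] at hpT
        exact (hpT.mono (Set.subset_insert _ _)).cons (.inr (Set.mem_insert _ _))
      · exact hxr.trans (List.suffix_cons _ _)
    · obtain ⟨q, hqS, hqT, hxr'⟩ := h w hw
      exact ⟨q, fun z hz => .inr (hqS z hz), hqT.mono (Set.subset_insert _ _), hxr'⟩

lemma IsFunnel.exists_walk (h : G.IsFunnel T x r S) (hu : u ∈ S) (hv : v ∈ S) :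
    ∃ p : G.Walk u v, TCompatible T p.support := by
  obtain ⟨p, -, hpT, A, hA⟩ := h u hu
  obtain ⟨q, -, hqT, B, hB⟩ := h v hv
  refine ⟨p.append q.reverse, ?_⟩
  have hrev : TCompatible T (r :: x :: B.reverse) := by simpa [← hB] using hqT.reverse
  have hsupp : (p.append q.reverse).support = A ++ [x, r] ++ x :: B.reverse := by
    simp [Walk.support_append, Walk.support_reverse, ← hA, ← hB]
  rw [hsupp]
  exact (hA ▸ hpT).append_of_two_le_length (hrev.cons (.inl rfl)) (by simp)

open Finset

lemma forall_mem_transitionOf_iff {P : V → Prop} {a b c : V} :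
    (∀ e ∈ transitionOf a b c, ∀ z ∈ e, P z) ↔ P a ∧ P b ∧ P c := by
  simp [transitionOf, and_assoc]

lemma IsTransition.map {G' : SimpleGraph W} (f : G' ↪g G) {t : Sym2 (Sym2 W)}
    (ht : G'.IsTransition t) : G.IsTransition (Sym2.map (Sym2.map f) t) := by
  obtain ⟨a, b, c, hab, hbc, hac, rfl⟩ := ht
  exact ⟨f a, f b, f c, f.map_adj_iff.mpr hab, f.map_adj_iff.mpr hbc, f.injective.ne hac,
    transitionOf_map f a b c⟩

lemma exists_funnel_of_induce {S : Set V} {x r : S} {T : Finset (Sym2 (Sym2 S))}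
    (hT : ∀ t ∈ T, (G.induce S).IsTransition t) (hf : (G.induce S).IsFunnel T x r Set.univ) :
    ∃ T' : Finset (Sym2 (Sym2 V)), #T' = #T ∧
      (∀ t ∈ T', G.IsTransition t ∧ ∀ e ∈ t, ∀ z ∈ e, z ∈ S) ∧ G.IsFunnel T' x r S := by
  classical
  let f : G.induce S ↪g G := Embedding.induce S
  refine ⟨T.image (Sym2.map (Sym2.map f)),
    card_image_of_injective _ (Sym2.map.injective (Sym2.map.injective f.injective)), ?_, ?_⟩
  · simp only [mem_image]
    rintro _ ⟨t, ht, rfl⟩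
    refine ⟨(hT t ht).map f, fun e he z hz => ?_⟩
    obtain ⟨e, -, rfl⟩ := Sym2.mem_map.mp he
    obtain ⟨z, -, rfl⟩ := Sym2.mem_map.mp hz
    exact z.2
  · have := hf.map f
    rwa [Set.image_univ, show Set.range f = S from Subtype.range_coe, ← coe_image] at this

lemma exists_funnel_of_induce_compl_singleton {v₀ u : V} (hu : G.Adj v₀ u)
    {x r : ({v₀}ᶜ : Set V)} {T : Finset (Sym2 (Sym2 ({v₀}ᶜ : Set V)))}
    (hT : ∀ t ∈ T, (G.induce {v₀}ᶜ).IsTransition t)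
    (hf : (G.induce {v₀}ᶜ).IsFunnel T x r Set.univ) :
    ∃ T' : Finset (Sym2 (Sym2 V)),
      (∀ t ∈ T', G.IsTransition t) ∧ #T' = #T + 1 ∧ G.IsFunnel T' x r Set.univ := by
  classical
  obtain ⟨T₁, hT₁card, hT₁, hf₁⟩ := exists_funnel_of_induce hT hf
  obtain ⟨y, hy, huy, hf'⟩ := hf₁.insert hu.ne' hu
  have hnew : transitionOf v₀ u y ∉ T₁ := fun hmem =>
    (forall_mem_transitionOf_iff.mp (hT₁ _ hmem).2).1 rfl
  refine ⟨insert (transitionOf v₀ u y) T₁, ?_, by rw [card_insert_of_notMem hnew, hT₁card], ?_⟩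
  · rintro _ ht
    rcases mem_insert.mp ht with rfl | ht
    · exact ⟨v₀, u, y, hu, huy, Ne.symm hy, rfl⟩
    · exact (hT₁ _ ht).1
  · rwa [coe_insert, ← Set.union_compl_self {v₀}, ← Set.insert_eq]

theorem Connected.exists_funnel [Finite V] (hc : G.Connected) (h2 : 2 ≤ Nat.card V) :
    ∃ (x r : V) (T : Finset (Sym2 (Sym2 V))),
      (∀ t ∈ T, G.IsTransition t) ∧ #T = Nat.card V - 2 ∧ G.IsFunnel T x r Set.univ := by
  induction hn : Nat.card V generalizing V with
  | zero => omega
  | succ n ih =>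
    have : Nontrivial V := Finite.one_lt_card_iff_nontrivial.mp (by omega)
    obtain rfl | hn2 : n = 1 ∨ 2 ≤ n := by omega
    · obtain ⟨x, y, hxy, huniv⟩ := Nat.card_eq_two_iff.mp hn
      obtain ⟨r, hxr⟩ := hc.preconnected.exists_adj_of_nontrivial x
      obtain rfl : r = y := by simpa [← huniv, hxr.ne'] using Set.mem_univ r
      exact ⟨x, r, ∅, by simp, by simp, huniv ▸ isFunnel_pair hxr⟩
    · obtain ⟨v₀, hv₀⟩ := hc.exists_connected_induce_compl_singleton_of_finite_nontrivial
      obtain ⟨u, hu⟩ := hc.preconnected.exists_adj_of_nontrivial v₀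
      have hcard : Nat.card ({v₀}ᶜ : Set V) = n := by
        have := Set.ncard_add_ncard_compl {v₀}
        rw [Set.ncard_singleton, hn] at this
        rw [Nat.card_coe_set_eq]
        omega
      obtain ⟨x, r, T, hT, hTcard, hf⟩ := ih hv₀ (by omega) hcard
      obtain ⟨T', hT', hT'card, hf'⟩ := exists_funnel_of_induce_compl_singleton hu hT hf
      exact ⟨x, r, T', hT', by omega, hf'⟩

theorem exists_funnel_of_connected_induce [Finite V] {S : Set V} (hS : (G.induce S).Connected)
    (h2 : 2 ≤ S.ncard) :
    ∃ (x r : V) (T : Finset (Sym2 (Sym2 V))), #T = S.ncard - 2 ∧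
      (∀ t ∈ T, G.IsTransition t ∧ ∀ e ∈ t, ∀ z ∈ e, z ∈ S) ∧ G.IsFunnel T x r S := by
  rw [← Nat.card_coe_set_eq] at h2 ⊢
  obtain ⟨x, r, T, hT, hTcard, hf⟩ := hS.exists_funnel h2
  obtain ⟨T', hT'card, hT', hf'⟩ := exists_funnel_of_induce hT hf
  exact ⟨x, r, T', hT'card.trans hTcard, hT', hf'⟩

lemma adj_of_connectedComponentMk_compl_ne {u v : V}
    (h : Gᶜ.connectedComponentMk u ≠ Gᶜ.connectedComponentMk v) : G.Adj u v := by
  by_contra hadj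
  exact h (ConnectedComponent.eq.mpr (Adj.reachable ⟨fun huv => h (huv ▸ rfl), hadj⟩))

open scoped Classical in
lemma exists_connected_induce_of_coComponent [Finite V] (hc : G.Connected)
    (C : Gᶜ.ConnectedComponent) :
    ∃ (w : V) (S : Set V), C.supp ⊆ S ∧ S ⊆ insert w C.supp ∧ (G.induce S).Connected ∧
      S.ncard = if (G.induce C.supp).Connected then C.supp.ncard else C.supp.ncard + 1 := by
  by_cases hC : (G.induce C.supp).Connected
  · obtain ⟨w⟩ := hc.nonempty
    exact ⟨w, C.supp, subset_rfl, Set.subset_insert _ _, hC, by rw [if_pos hC]⟩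
  obtain ⟨w, hw⟩ : ∃ w, w ∉ C.supp := by
    by_contra! hall
    rw [Set.eq_univ_of_forall hall] at hC
    exact hC (G.induceUnivIso.connected_iff.mpr hc)
  refine ⟨w, insert w C.supp, Set.subset_insert _ _, subset_rfl, ?_, ?_⟩
  · refine (connected_iff_exists_forall_reachable _).mpr ⟨⟨w, Set.mem_insert _ _⟩, ?_⟩
    rintro ⟨z, rfl | hz⟩
    · rfl
    · refine Adj.reachable (?_ : G.Adj w z)
      exact adj_of_connectedComponentMk_compl_ne (by rw [hz]; exact hw)
  · rw [if_neg hC, Set.ncard_insert_of_notMem hw]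

open scoped Classical in
lemma exists_transitions_connecting_coComponent [Finite V] (hc : G.Connected)
    (C : Gᶜ.ConnectedComponent) :
    ∃ (w : V) (T : Finset (Sym2 (Sym2 V))),
      #T = (if 2 ≤ C.supp.ncard then
        (if (G.induce C.supp).Connected then C.supp.ncard - 2 else C.supp.ncard - 1) else 0) ∧
      (∀ t ∈ T, G.IsTransition t ∧ ∀ e ∈ t, ∀ z ∈ e, z ∈ insert w C.supp) ∧
      ∀ u ∈ C.supp, ∀ v ∈ C.supp, ∃ p : G.Walk u v, TCompatible T p.support := by
  obtain ⟨w, S, hCS, hSw, hS, hScard⟩ := exists_connected_induce_of_coComponent hc C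
  by_cases h2 : 2 ≤ C.supp.ncard
  · obtain ⟨x, r, T, hTcard, hT, hf⟩ :=
      exists_funnel_of_connected_induce hS (by split_ifs at hScard <;> omega)
    refine ⟨w, T, by split_ifs at hScard ⊢ <;> omega, fun t ht => ?_,
      fun u hu v hv => hf.exists_walk (hCS hu) (hCS hv)⟩
    exact ⟨(hT t ht).1, fun e he z hz => hSw ((hT t ht).2 e he z hz)⟩
  · refine ⟨w, ∅, by rw [if_neg h2, card_empty], by simp, fun u hu v hv => ?_⟩
    obtain rfl : u = v := (Set.ncard_le_one (Set.toFinite _)).mp (by omega) u hu v hv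
    exact ⟨.nil, tCompatible_of_length_le_two (by simp)⟩

lemma disjoint_of_forall_mem_insert {A A' : Set V} (hAA' : Disjoint A A') {w w' : V}
    {T T' : Finset (Sym2 (Sym2 V))}
    (hT : ∀ t ∈ T, G.IsTransition t ∧ ∀ e ∈ t, ∀ z ∈ e, z ∈ insert w A)
    (hT' : ∀ t ∈ T', ∀ e ∈ t, ∀ z ∈ e, z ∈ insert w' A') : Disjoint T T' := by
  refine Finset.disjoint_left.mpr fun t ht ht' => ?_
  have hpair : ∀ z ∈ insert w A, z ∈ insert w' A' → z = w ∨ z = w' := by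
    rintro z (rfl | hz) (rfl | hz')
    exacts [.inl rfl, .inl rfl, .inr rfl, (Set.disjoint_left.mp hAA' hz hz').elim]
  obtain ⟨⟨a, b, c, hab, hbc, hac, rfl⟩, hA⟩ := hT t ht
  obtain ⟨ha, hb, hc⟩ := forall_mem_transitionOf_iff.mp fun e he z hz =>
    hpair z (hA e he z hz) (hT' _ ht' e he z hz)
  grind [hab.ne, hbc.ne]

end SimpleGraph

open SimpleGraph Finset in
theorem stmt4_general {V : Type*} [Fintype V] (G : SimpleGraph V)
    (hc : G.Connected) :
    ∃ T : Finset (Sym2 (Sym2 V)), G.ConnectingTransitionSet T ∧ T.card = tau G := by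
  classical
  let : Fintype Gᶜ.ConnectedComponent := Fintype.ofFinite _
  choose w T hcard hT hconn using exists_transitions_connecting_coComponent hc
  refine ⟨univ.biUnion T, ⟨fun t ht => ?_, fun u v => ?_⟩, ?_⟩
  · obtain ⟨C, -, htC⟩ := mem_biUnion.mp ht
    exact (hT C t htC).1
  · by_cases huv : Gᶜ.connectedComponentMk u = Gᶜ.connectedComponentMk v
    · obtain ⟨p, hp⟩ := hconn _ u rfl v huv.symm
      exact ⟨p, hp.mono (coe_subset.mpr (subset_biUnion_of_mem T (mem_univ _)))⟩
    · exact ⟨.cons (adj_of_connectedComponentMk_compl_ne huv) .nil,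
        tCompatible_of_length_le_two (by simp)⟩
  · rw [card_biUnion fun C _ D _ hCD => disjoint_of_forall_mem_insert
      (pairwise_disjoint_supp_connectedComponent _ hCD) (hT C) fun t ht => (hT D t ht).2]
    unfold tau
    exact sum_congr rfl fun C _ => by convert hcard C

/-- Every connected graph has a connecting transition set of size τ(G). -/
theorem stmt4 {V : Type*} [Fintype V] [DecidableEq V] (G : SimpleGraph V)
    (hc : G.Connected) :
    ∃ T : Finset (Sym2 (Sym2 V)), G.ConnectingTransitionSet T ∧ T.card = tau G :=
  stmt4_general G hc
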